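/- arXiv:1501.00739 — 3 statements merged into one kernel-verified Lean document; each statement's English description precedes it below -/
import Mathlib

section
/- Spin-flip contribution bound: Let x ∈ 𝒮_hgt with interface y. Assume (i) there is s̄ > 0 such that p_k(x) + q_k(x) ≥ s̄ for every half-integer k with x_{k−1} ≠ x_k, and (ii) (A4a) for all half-integers k < l such that x_{k−1} ≠ x_k, x_{l−1} ≠ x_l and x is constant on {k, k+1, …, l−1}, one has p_k(x) + q_l(x) ≥ q_k(x) + p_l(x). Then (G^flip f_CD)(x) ≤ s̄ − s̄·|y|/2. -/
open scoped BigOperators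

/- Half-integers `k ∈ ℤ + 1/2` are represented by integers `j`, via `k = j + 1/2`.
A height configuration is a function `x : ℤ → ℤ` with values in `{0,1}`,
eventually constant in both directions with different limiting values. -/
def IsHeight (x : ℤ → ℤ) : Prop :=
  (∀ k, x k = 0 ∨ x k = 1) ∧
  ∃ a b : ℤ, a ≠ b ∧ (∃ N : ℤ, ∀ k ≤ N, x k = a) ∧ (∃ M : ℤ, ∀ k, M ≤ k → x k = b)

/-- The interface of a height configuration: `y i = x (i+1/2) - x (i-1/2)`. -/
def itf (x : ℤ → ℤ) : ℤ → ℤ := fun i => x i - x (i - 1)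

/-- The charge of a particle configuration. -/
noncomputable def charge (y : ℤ → ℤ) : ℤ := ∑ᶠ i, y i

/-- The particle number of a particle configuration. -/
noncomputable def pnum (y : ℤ → ℤ) : ℤ := ∑ᶠ i, |y i|

/-- `κ = (1 + ch(y))/2`. -/
noncomputable def kappa (x : ℤ → ℤ) : ℤ := (1 + charge (itf x)) / 2

/-- The inversion count `f_CD`. -/
noncomputable def fCD (x : ℤ → ℤ) : ℕ :=
  Nat.card {p : ℤ × ℤ // p.1 < p.2 ∧ x p.1 = kappa x ∧ x p.2 = 1 - kappa x}

/-- Flip the height at position `k`. -/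
def flipAt (x : ℤ → ℤ) (k : ℤ) : ℤ → ℤ := Function.update x k (1 - x k)

/-- Interchange the heights at positions `k` and `k+1`. -/
def swapAt (x : ℤ → ℤ) (k : ℤ) : ℤ → ℤ :=
  fun j => if j = k then x (k + 1) else if j = k + 1 then x k else x j

/-- `S(k) = Σ_{l<k} 1{x_l = κ} − Σ_{l>k} 1{x_l = 1−κ}`. -/
noncomputable def Sfun (x : ℤ → ℤ) (k : ℤ) : ℤ :=
  (Nat.card {l : ℤ // l < k ∧ x l = kappa x} : ℤ)
    - (Nat.card {l : ℤ // k < l ∧ x l = 1 - kappa x} : ℤ)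

/-- The spin-flip part of the generator applied to `f_CD`. -/
noncomputable def Gflip (p q : ℤ → ℝ) (x : ℤ → ℤ) : ℝ :=
  ∑ᶠ k : ℤ, (p k + q (k + 1)) * ((fCD (flipAt x k) : ℝ) - (fCD x : ℝ))

/-- The exclusion part of the generator applied to `f_CD`. -/
noncomputable def Gexcl (bp bm : ℤ → ℝ) (x : ℤ → ℤ) : ℝ :=
  ∑ᶠ k : ℤ,
    ((if x k = 0 ∧ x (k + 1) = 1 then bp (k + 1) else 0)
      + (if x k = 1 ∧ x (k + 1) = 0 then bm (k + 1) else 0))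
    * ((fCD (swapAt x k) : ℝ) - (fCD x : ℝ))

/-!
Let `h` be the indicator of the sites where `x` takes its value `κ` at `+∞`. Then `f_CD` is the
quadratic form `∑_{u<v} h_u (1 - h_v)`, so flipping the site `k` changes it by
`(2 h_k - 1) (k - C + 1 - h_k)` for a constant `C` depending only on `x`. Hence the rates
`p_k`, `q_k` of an interface `k` (flipping `k` and `k - 1`), with sign `ε_k = h_k - h_{k-1} = ±1`,
contribute `ε_k (k - C) (p_k - q_k)` plus, when `ε_k = -1`, the term `-(p_k + q_k) ≤ -s̄`.
Since `∑ ε_k = 1`, there are `(|y| - 1)/2` interfaces of sign `-1`. The remaining sum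
`∑ ε_k (k - C) (p_k - q_k)` is `≤ 0` by summation by parts: (A4a) says that `p - q` decreases
from each interface to the next, and the partial sums of `ε_k (k - C)` are `≤ 0` and add up
to `0`.
-/

open Finset

theorem Finset.sum_Ioc_sub_eq {G : Type*} [AddCommGroup G] (f : ℤ → G) {N m : ℤ} (h : N ≤ m) :
    ∑ k ∈ Ioc N m, (f k - f (k - 1)) = f m - f N := by
  induction m, h using Int.leInduction with
  | base => simp
  | succ m hm ih =>
    rw [← insert_Ioc_right_eq_Ioc_add_one hm, sum_insert (by simp), ih, add_sub_cancel_right]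
    abel

theorem Finset.sum_Ioc_sub_mul_eq {R : Type*} [CommRing R] (h : ℤ → R) (c : R) {N m : ℤ}
    (hm : N ≤ m) :
    ∑ k ∈ Ioc N m, (h k - h (k - 1)) * (k - c) =
      h m * (m - c) - h N * (N - c) - ∑ u ∈ Ico N m, h u := by
  induction m, hm using Int.leInduction with
  | base => simp
  | succ m hm ih =>
    rw [← insert_Ioc_right_eq_Ioc_add_one hm, ← insert_Ico_right_eq_Ico_add_one hm,
      sum_insert (by simp), sum_insert (by simp), ih, add_sub_cancel_right]
    push_cast
    ring

theorem Finset.sum_Icc_eq_sum_Ico_add_sum_Ico {G : Type*} [AddCommMonoid G] (f : ℤ → G)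
    {a b c : ℤ} (hab : a ≤ b) (hbc : b ≤ c + 1) :
    ∑ u ∈ Icc a c, f u = ∑ u ∈ Ico a b, f u + ∑ u ∈ Ico b (c + 1), f u := by
  rw [← Ico_add_one_right_eq_Icc, ← sum_union (Ico_disjoint_Ico_consecutive _ _ _),
    Ico_union_Ico_eq_Ico hab hbc]

theorem Finset.sum_mul_le_mul_sum_of_antitoneOn {ι R : Type*} [LinearOrder ι] [CommRing R]
    [PartialOrder R] [IsOrderedRing R] (A : Finset ι) (v e : ι → R)
    (hv : ∀ m ∈ A, ∑ k ∈ A with k ≤ m, v k ≤ 0) (he : AntitoneOn e A) {c : R}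
    (hc : ∀ k ∈ A, c ≤ e k) : ∑ k ∈ A, v k * e k ≤ c * ∑ k ∈ A, v k := by
  induction A using Finset.induction_on_max generalizing c with
  | empty => simp
  | insert a s ha ih =>
    have has : a ∉ s := fun h => (ha a h).false
    have hprefix : ∀ m ∈ s, ∑ k ∈ s with k ≤ m, v k ≤ 0 := by
      intro m hm
      simpa [filter_insert, not_le.2 (ha m hm)] using hv m (mem_insert_of_mem hm)
    have htotal : ∑ k ∈ insert a s, v k ≤ 0 := by
      have hall : (insert a s).filter (· ≤ a) = insert a s :=
        filter_true_of_mem fun k hk => (mem_insert.1 hk).elim le_of_eq fun hk => (ha k hk).le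
      simpa [hall] using hv a (mem_insert_self a s)
    have hs := ih hprefix (he.mono (subset_insert a s)) fun k hk =>
      he (mem_insert_of_mem hk) (mem_insert_self a s) (ha k hk).le
    calc ∑ k ∈ insert a s, v k * e k ≤ v a * e a + e a * ∑ k ∈ s, v k := by
          rw [sum_insert has]; gcongr
      _ = e a * ∑ k ∈ insert a s, v k := by rw [sum_insert has]; ring
      _ ≤ c * ∑ k ∈ insert a s, v k :=
          mul_le_mul_of_nonpos_right (hc a (mem_insert_self a s)) htotal

theorem Finset.sum_mul_nonpos_of_antitoneOn {ι R : Type*} [LinearOrder ι] [CommRing R]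
    [LinearOrder R] [IsOrderedRing R] (A : Finset ι) (v e : ι → R)
    (hv : ∀ m ∈ A, ∑ k ∈ A with k ≤ m, v k ≤ 0) (hsum : ∑ k ∈ A, v k = 0) (he : AntitoneOn e A) :
    ∑ k ∈ A, v k * e k ≤ 0 := by
  obtain ⟨c, hc⟩ := (A.image e).bddBelow
  simpa [hsum] using
    A.sum_mul_le_mul_sum_of_antitoneOn v e hv he fun k hk => hc (mem_image_of_mem e hk)

theorem exists_sub_one_ne_of_ne {α : Type*} (x : ℤ → α) {k m : ℤ} (hkm : k ≤ m) (h : x m ≠ x k) :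
    ∃ j, k < j ∧ j ≤ m ∧ x (j - 1) ≠ x j := by
  by_contra! hc
  induction m, hkm using Int.leInduction with
  | base => exact h rfl
  | succ m hkm ih =>
    refine ih ?_ fun j hj hjm => hc j hj (by omega)
    rwa [← hc (m + 1) (by omega) le_rfl, add_sub_cancel_right] at h

theorem antitoneOn_of_consecutive {α β : Type*} [Preorder β] (x : ℤ → α) (e : ℤ → β)
    (h : ∀ k l, k < l → x (k - 1) ≠ x k → x (l - 1) ≠ x l →
      (∀ m, k ≤ m → m < l → x m = x k) → e l ≤ e k) :
    AntitoneOn e {k | x (k - 1) ≠ x k} := by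
  intro k hk l hl hkl
  induction hn : (l - k).toNat using Nat.strong_induction_on generalizing k l with
  | _ n ih =>
  rcases hkl.eq_or_lt with rfl | hlt
  · exact le_rfl
  by_cases hconst : ∀ m, k ≤ m → m < l → x m = x k
  · exact h k l hlt hk hl hconst
  push Not at hconst
  obtain ⟨m, hkm, hml, hne⟩ := hconst
  obtain ⟨j, hkj, hjm, hj⟩ := exists_sub_one_ne_of_ne x hkm hne
  exact (ih _ (by omega) hj hl (by omega) rfl).trans (ih _ (by omega) hk hj hkj.le rfl)

theorem finsum_add_shift_mul_eq_sum {R : Type*} [Semiring R] (A : Finset ℤ) (p q D : ℤ → R)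
    (hp : ∀ k ∉ A, p k = 0) (hq : ∀ k ∉ A, q k = 0) :
    ∑ᶠ k, (p k + q (k + 1)) * D k = ∑ k ∈ A, (p k * D k + q k * D (k - 1)) := by
  have hpA : Function.support (fun k => p k * D k) ⊆ A := fun k hk => by
    by_contra h; simp [hp k h] at hk
  have hqA : Function.support (fun k => q k * D (k - 1)) ⊆ A := fun k hk => by
    by_contra h; simp [hq k h] at hk
  have hshift : ∑ᶠ k, q (k + 1) * D k = ∑ᶠ k, q k * D (k - 1) := by
    simpa using finsum_comp_equiv (Equiv.addRight (1 : ℤ)) (f := fun k => q k * D (k - 1))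
  have hfin : (Function.support fun k => q (k + 1) * D k).Finite := by
    refine (A.image (· - 1)).finite_toSet.subset fun k hk => mem_image.2 ⟨k + 1, ?_, by ring⟩
    by_contra h; simp [hq _ h] at hk
  simp_rw [add_mul]
  rw [finsum_add_distrib (A.finite_toSet.subset hpA) hfin, hshift,
    finsum_eq_finsetSum_of_support_subset _ hpA, finsum_eq_finsetSum_of_support_subset _ hqA,
    sum_add_distrib]

noncomputable def inversionSum (W : Finset ℤ) (h : ℤ → ℝ) : ℝ :=
  ∑ u ∈ W, ∑ v ∈ W, if u < v then h u * (1 - h v) else 0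

theorem inversionSum_update (W : Finset ℤ) (h : ℤ → ℝ) {k : ℤ} (hk : k ∈ W) (c : ℝ) :
    inversionSum W (Function.update h k c) - inversionSum W h =
      (c - h k) * (∑ v ∈ W with k < v, (1 - h v) - ∑ u ∈ W with u < k, h u) := by
  have hterm : ∀ u v, ((if u < v then Function.update h k c u * (1 - Function.update h k c v)
      else 0) - if u < v then h u * (1 - h v) else 0) =
      (if u = k then (if k < v then (c - h k) * (1 - h v) else 0) else 0) -
        (if v = k then (if u < k then (c - h k) * h u else 0) else 0) := by
    intro u v
    by_cases hu : u = k <;> by_cases hv : v = k <;> subst_vars <;>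
      simp only [Function.update_self, Function.update_of_ne, ne_eq, not_false_eq_true,
        lt_self_iff_false, ↓reduceIte, sub_self, sub_zero, zero_sub, *] <;>
      split_ifs <;> ring
  rw [mul_sub, mul_sum, mul_sum, sum_filter, sum_filter, inversionSum, inversionSum,
    ← sum_sub_distrib]
  simp_rw [← sum_sub_distrib, hterm, sum_sub_distrib, sum_ite_eq', if_pos hk]
  rw [sum_comm]
  simp_rw [sum_ite_eq', if_pos hk]

theorem sum_Icc_filter_gt_sub_sum_Icc_filter_lt (h : ℤ → ℝ) {N M k : ℤ} (hk : k ∈ Icc N M) :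
    ∑ v ∈ Icc N M with k < v, (1 - h v) - ∑ u ∈ Icc N M with u < k, h u =
      M - k - (∑ u ∈ Icc N M, h u - h k) := by
  have hpt : ∀ v, ((if k < v then 1 - h v else 0) - if v < k then h v else 0) =
      ((if k < v then 1 else 0) - h v) + if k = v then h k else 0 := by
    intro v
    split_ifs <;> first | omega | (subst_vars; ring)
  have hfilter : (Icc N M).filter (k < ·) = Ioc k M := by
    ext v; simp only [mem_filter, mem_Icc, mem_Ioc] at hk ⊢; omega
  have hcard : ((M - k).toNat : ℝ) = M - k := by
    rw [mem_Icc] at hk; exact_mod_cast Int.toNat_of_nonneg (by omega : 0 ≤ M - k)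
  rw [sum_filter, sum_filter, ← sum_sub_distrib]
  simp_rw [hpt, sum_add_distrib, sum_sub_distrib, sum_ite_eq, if_pos hk, sum_boole, hfilter,
    Int.card_Ioc, hcard]
  ring

noncomputable def kappaInd (x : ℤ → ℤ) (k : ℤ) : ℝ := if x k = kappa x then 1 else 0

noncomputable def interfaceSign (x : ℤ → ℤ) (k : ℤ) : ℝ := kappaInd x k - kappaInd x (k - 1)

noncomputable def interfaces (x : ℤ → ℤ) (N M : ℤ) : Finset ℤ := {k ∈ Ioc N M | x (k - 1) ≠ x k}

/-- By `IsHeightBetween.sum_interfaceSign` and `IsHeightBetween.sum_interfaceSign_mul`, this is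
the signed sum `∑ₖ interfaceSign x k * k` of the interface positions. -/
noncomputable def interfaceCenter (x : ℤ → ℤ) (N M : ℤ) : ℝ :=
  M + 1 - ∑ u ∈ Icc N M, kappaInd x u

theorem kappaInd_eq_zero_or_one (x : ℤ → ℤ) (k : ℤ) : kappaInd x k = 0 ∨ kappaInd x k = 1 := by
  unfold kappaInd; split_ifs <;> simp

theorem kappaInd_nonneg (x : ℤ → ℤ) (k : ℤ) : 0 ≤ kappaInd x k := by
  rcases kappaInd_eq_zero_or_one x k with h | h <;> norm_num [h]

theorem kappaInd_le_one (x : ℤ → ℤ) (k : ℤ) : kappaInd x k ≤ 1 := by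
  rcases kappaInd_eq_zero_or_one x k with h | h <;> norm_num [h]

theorem interfaceSign_eq_zero {x : ℤ → ℤ} {k : ℤ} (hk : x (k - 1) = x k) :
    interfaceSign x k = 0 := by
  simp [interfaceSign, kappaInd, hk]

theorem interfaceSign_le_one (x : ℤ → ℤ) (k : ℤ) : interfaceSign x k ≤ 1 := by
  unfold interfaceSign
  linarith [kappaInd_le_one x k, kappaInd_nonneg x (k - 1)]

structure IsHeightBetween (x : ℤ → ℤ) (a N M : ℤ) : Prop where
  binary : ∀ k, x k = 0 ∨ x k = 1
  left : ∀ k ≤ N, x k = a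
  right : ∀ k, M ≤ k → x k = 1 - a

namespace IsHeightBetween

variable {x : ℤ → ℤ} {a N M : ℤ}

theorem lt (hx : IsHeightBetween x a N M) : N < M := by
  by_contra! h
  have := hx.left N le_rfl
  have := hx.right N h
  omega

theorem lt_of_sub_one_ne (hx : IsHeightBetween x a N M) {k : ℤ} (hk : x (k - 1) ≠ x k) :
    N < k ∧ k ≤ M := by
  constructor <;> by_contra! h
  · exact hk ((hx.left _ (by omega)).trans (hx.left k h).symm)
  · exact hk ((hx.right _ (by omega)).trans (hx.right k (by omega)).symm)

theorem mono (hx : IsHeightBetween x a N M) {N' M' : ℤ} (hN : N' ≤ N) (hM : M ≤ M') :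
    IsHeightBetween x a N' M' :=
  ⟨hx.binary, fun k hk => hx.left k (hk.trans hN), fun k hk => hx.right k (hM.trans hk)⟩

theorem flipAt (hx : IsHeightBetween x a N M) {k : ℤ} (hN : N < k) (hM : k < M) :
    IsHeightBetween (flipAt x k) a N M := by
  refine ⟨fun j => ?_, fun j hj => ?_, fun j hj => ?_⟩
  · rcases eq_or_ne j k with rfl | hj
    · rcases hx.binary j with h | h <;> simp [_root_.flipAt, h]
    · simpa [_root_.flipAt, hj] using hx.binary j
  · rw [_root_.flipAt, Function.update_of_ne (by omega)]; exact hx.left j hj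
  · rw [_root_.flipAt, Function.update_of_ne (by omega)]; exact hx.right j hj

theorem kappa_eq (hx : IsHeightBetween x a N M) : kappa x = 1 - a := by
  have hsupp : Function.support (itf x) ⊆ Ioc N M := fun i hi => by
    simpa using hx.lt_of_sub_one_ne (k := i) fun h => hi (by simp [itf, h])
  have hcharge : charge (itf x) = 1 - 2 * a := by
    rw [charge, finsum_eq_finsetSum_of_support_subset _ hsupp]
    unfold itf
    rw [sum_Ioc_sub_eq x hx.lt.le, hx.left N le_rfl, hx.right M le_rfl]
    ring
  rw [kappa, hcharge]
  omega

theorem kappa_eq_zero_or_one (hx : IsHeightBetween x a N M) : kappa x = 0 ∨ kappa x = 1 := by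
  have := hx.left N le_rfl; have := hx.binary N; rw [hx.kappa_eq]; omega

theorem eq_one_sub_kappa_iff (hx : IsHeightBetween x a N M) (k : ℤ) :
    x k = 1 - kappa x ↔ x k ≠ kappa x := by
  have := hx.binary k; have := hx.kappa_eq_zero_or_one; omega

theorem lt_of_eq_kappa (hx : IsHeightBetween x a N M) {k : ℤ} (hk : x k = kappa x) : N < k := by
  by_contra! h
  have := hx.left k h
  rw [hx.kappa_eq] at hk
  omega

theorem lt_of_ne_kappa (hx : IsHeightBetween x a N M) {k : ℤ} (hk : x k ≠ kappa x) : k < M := by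
  by_contra! h
  exact hk ((hx.right k h).trans hx.kappa_eq.symm)

theorem kappaInd_of_le (hx : IsHeightBetween x a N M) {k : ℤ} (hk : k ≤ N) : kappaInd x k = 0 :=
  if_neg fun h => (hx.lt_of_eq_kappa h).not_ge hk

theorem kappaInd_of_ge (hx : IsHeightBetween x a N M) {k : ℤ} (hk : M ≤ k) : kappaInd x k = 1 :=
  if_pos (by_contra fun h => (hx.lt_of_ne_kappa h).not_ge hk)

theorem kappaInd_sub_one (hx : IsHeightBetween x a N M) {k : ℤ} (hk : x (k - 1) ≠ x k) :
    kappaInd x (k - 1) = 1 - kappaInd x k := by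
  have := hx.binary k; have := hx.binary (k - 1); have := hx.kappa_eq_zero_or_one
  unfold kappaInd; split_ifs <;> first | omega | norm_num

theorem fCD_eq (hx : IsHeightBetween x a N M) :
    (fCD x : ℝ) = inversionSum (Icc N M) (kappaInd x) := by
  have hmem : ∀ p : ℤ × ℤ, (p.1 < p.2 ∧ x p.1 = kappa x ∧ x p.2 = 1 - kappa x) ↔
      p ∈ (Icc N M ×ˢ Icc N M).filter
        fun p => p.1 < p.2 ∧ x p.1 = kappa x ∧ x p.2 = 1 - kappa x := by
    intro p
    rw [mem_filter, mem_product, mem_Icc, mem_Icc]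
    refine ⟨fun hp => ⟨?_, hp⟩, And.right⟩
    obtain ⟨h12, h1, h2⟩ := hp
    have h1' := hx.lt_of_eq_kappa h1
    have h2' := hx.lt_of_ne_kappa ((hx.eq_one_sub_kappa_iff _).1 h2)
    omega
  rw [fCD, Nat.card_congr (Equiv.subtypeEquivRight hmem), Nat.card_eq_finsetCard, card_filter,
    sum_product, inversionSum]
  push_cast
  refine sum_congr rfl fun u _ => sum_congr rfl fun v _ => ?_
  simp only [hx.eq_one_sub_kappa_iff, kappaInd]
  split_ifs <;> simp_all

theorem kappaInd_flipAt (hx : IsHeightBetween x a N M) {k : ℤ} (hN : N < k) (hM : k < M) :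
    kappaInd (_root_.flipAt x k) = Function.update (kappaInd x) k (1 - kappaInd x k) := by
  have hκ : kappa (_root_.flipAt x k) = kappa x := by
    rw [(hx.flipAt hN hM).kappa_eq, hx.kappa_eq]
  ext j
  simp only [kappaInd, hκ]
  rcases eq_or_ne j k with rfl | hj
  · have := hx.binary j; have := hx.kappa_eq_zero_or_one
    simp only [_root_.flipAt, Function.update_self]
    split_ifs <;> first | omega | norm_num
  · simp only [_root_.flipAt, Function.update_of_ne hj, kappaInd]

theorem fCD_flipAt_sub (hx : IsHeightBetween x a N M) {k : ℤ} (hN : N < k) (hM : k < M) :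
    (fCD (_root_.flipAt x k) : ℝ) - fCD x =
      (2 * kappaInd x k - 1) * (k - interfaceCenter x N M + 1 - kappaInd x k) := by
  have hk : k ∈ Icc N M := mem_Icc.2 ⟨hN.le, hM.le⟩
  rw [(hx.flipAt hN hM).fCD_eq, hx.fCD_eq, hx.kappaInd_flipAt hN hM, inversionSum_update _ _ hk,
    sum_Icc_filter_gt_sub_sum_Icc_filter_lt _ hk, interfaceCenter]
  ring

theorem flip_contribution_eq (hx : IsHeightBetween x a N M) {k : ℤ} (hN : N < k - 1)
    (hM : k < M) (hk : x (k - 1) ≠ x k) (p q : ℝ) :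
    p * ((fCD (_root_.flipAt x k) : ℝ) - fCD x) +
        q * ((fCD (_root_.flipAt x (k - 1)) : ℝ) - fCD x) =
      interfaceSign x k * (k - interfaceCenter x N M) * (p - q) +
        (interfaceSign x k - 1) * (p + q) / 2 := by
  rw [hx.fCD_flipAt_sub (by omega) hM, hx.fCD_flipAt_sub hN (by omega), interfaceSign,
    hx.kappaInd_sub_one hk]
  push_cast
  rcases kappaInd_eq_zero_or_one x k with h | h <;> rw [h] <;> ring

theorem mem_interfaces (hx : IsHeightBetween x a N M) {k : ℤ} :
    k ∈ interfaces x N M ↔ x (k - 1) ≠ x k := by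
  rw [interfaces, mem_filter, mem_Ioc, and_iff_right_iff_imp]
  exact hx.lt_of_sub_one_ne

theorem Gflip_eq (hx : IsHeightBetween x a N M)
    (hinner : ∀ k, x (k - 1) ≠ x k → N + 1 < k ∧ k < M) {p q : ℤ → ℝ}
    (hrate : ∀ k, x (k - 1) = x k → p k = 0 ∧ q k = 0) :
    Gflip p q x = ∑ k ∈ interfaces x N M,
      (interfaceSign x k * (k - interfaceCenter x N M) * (p k - q k) +
        (interfaceSign x k - 1) * (p k + q k) / 2) := by
  have hoff : ∀ k ∉ interfaces x N M, x (k - 1) = x k :=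
    fun k hk => not_not.1 (mt hx.mem_interfaces.2 hk)
  rw [Gflip, finsum_add_shift_mul_eq_sum _ p q _ (fun k hk => (hrate k (hoff k hk)).1)
    (fun k hk => (hrate k (hoff k hk)).2)]
  refine sum_congr rfl fun k hk => ?_
  have hk := hx.mem_interfaces.1 hk
  exact hx.flip_contribution_eq (by linarith [hinner k hk]) (hinner k hk).2 hk (p k) (q k)

theorem sum_interfaces_eq_sum_Ioc {f : ℤ → ℝ} (hf : ∀ k, x (k - 1) = x k → f k = 0) {m : ℤ}
    (hm : m ≤ M) : ∑ k ∈ interfaces x N M with k ≤ m, f k = ∑ k ∈ Ioc N m, f k := by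
  have hA : (interfaces x N M).filter (· ≤ m) = (Ioc N m).filter fun k => x (k - 1) ≠ x k := by
    ext k; simp only [interfaces, mem_filter, mem_Ioc]; constructor <;> intro h <;> omega
  rw [hA, sum_filter_of_ne fun k _ hk => (mt (hf k) hk : x (k - 1) ≠ x k)]

theorem sum_Ioc_interfaceSign_mul (hx : IsHeightBetween x a N M) {m : ℤ} (hm : N ≤ m) :
    ∑ k ∈ Ioc N m, interfaceSign x k * (k - interfaceCenter x N M) =
      kappaInd x m * (m - interfaceCenter x N M) - ∑ u ∈ Ico N m, kappaInd x u := by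
  unfold interfaceSign
  rw [sum_Ioc_sub_mul_eq _ _ hm, hx.kappaInd_of_le le_rfl]
  ring

theorem sum_Ioc_interfaceSign_mul_nonpos (hx : IsHeightBetween x a N M) {m : ℤ} (hNm : N ≤ m)
    (hmM : m ≤ M) : ∑ k ∈ Ioc N m, interfaceSign x k * (k - interfaceCenter x N M) ≤ 0 := by
  have hhead : 0 ≤ ∑ u ∈ Ico N m, kappaInd x u := sum_nonneg fun u _ => kappaInd_nonneg x u
  rw [hx.sum_Ioc_interfaceSign_mul hNm]
  rcases kappaInd_eq_zero_or_one x m with h | h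
  · rw [h]; linarith
  · have htail : ∑ u ∈ Ico m (M + 1), kappaInd x u ≤ M + 1 - m :=
      calc ∑ u ∈ Ico m (M + 1), kappaInd x u ≤ ∑ u ∈ Ico m (M + 1), (1 : ℝ) :=
            sum_le_sum fun u _ => kappaInd_le_one x u
        _ = M + 1 - m := by
          rw [sum_const, Int.card_Ico, nsmul_one]
          exact_mod_cast Int.toNat_of_nonneg (by omega : 0 ≤ M + 1 - m)
    rw [h, interfaceCenter, sum_Icc_eq_sum_Ico_add_sum_Ico _ hNm (by omega : m ≤ M + 1)]
    linarith

theorem sum_interfaceSign_mul_nonpos (hx : IsHeightBetween x a N M) {m : ℤ}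
    (hm : m ∈ interfaces x N M) :
    ∑ k ∈ interfaces x N M with k ≤ m, interfaceSign x k * (k - interfaceCenter x N M) ≤ 0 := by
  have hmNM := hx.lt_of_sub_one_ne (hx.mem_interfaces.1 hm)
  rw [sum_interfaces_eq_sum_Ioc (fun k hk => by rw [interfaceSign_eq_zero hk, zero_mul]) hmNM.2]
  exact hx.sum_Ioc_interfaceSign_mul_nonpos hmNM.1.le hmNM.2

theorem sum_interfaceSign_mul (hx : IsHeightBetween x a N M) :
    ∑ k ∈ interfaces x N M, interfaceSign x k * (k - interfaceCenter x N M) = 0 := by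
  rw [interfaces, sum_filter_of_ne fun k _ hk =>
      (mt (fun h => by rw [interfaceSign_eq_zero h, zero_mul]) hk : x (k - 1) ≠ x k),
    hx.sum_Ioc_interfaceSign_mul hx.lt.le, interfaceCenter,
    sum_Icc_eq_sum_Ico_add_sum_Ico _ hx.lt.le (by omega : M ≤ M + 1), Ico_add_one_right_eq_Icc,
    Icc_self, sum_singleton, hx.kappaInd_of_ge le_rfl]
  ring

theorem sum_interfaceSign (hx : IsHeightBetween x a N M) :
    ∑ k ∈ interfaces x N M, interfaceSign x k = 1 := by
  rw [interfaces, sum_filter_of_ne fun k _ hk => (mt interfaceSign_eq_zero hk : x (k - 1) ≠ x k)]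
  unfold interfaceSign
  rw [sum_Ioc_sub_eq _ hx.lt.le, hx.kappaInd_of_ge le_rfl, hx.kappaInd_of_le le_rfl, sub_zero]

theorem sum_interfaces_drift_nonpos (hx : IsHeightBetween x a N M) {e : ℤ → ℝ}
    (he : AntitoneOn e {k | x (k - 1) ≠ x k}) :
    ∑ k ∈ interfaces x N M, interfaceSign x k * (k - interfaceCenter x N M) * e k ≤ 0 :=
  sum_mul_nonpos_of_antitoneOn _ _ _ (fun _ hm => hx.sum_interfaceSign_mul_nonpos hm)
    hx.sum_interfaceSign_mul (he.mono fun _ hk => hx.mem_interfaces.1 hk)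

theorem sum_interfaces_flip_le (hx : IsHeightBetween x a N M) {p q : ℤ → ℝ} {sbar : ℝ}
    (hlow : ∀ k, x (k - 1) ≠ x k → sbar ≤ p k + q k) :
    ∑ k ∈ interfaces x N M, (interfaceSign x k - 1) * (p k + q k) / 2 ≤
      (1 - #(interfaces x N M)) * sbar / 2 :=
  calc ∑ k ∈ interfaces x N M, (interfaceSign x k - 1) * (p k + q k) / 2
      ≤ ∑ k ∈ interfaces x N M, (interfaceSign x k - 1) * sbar / 2 := by
        refine sum_le_sum fun k hk => ?_
        have := hlow k (hx.mem_interfaces.1 hk)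
        have := interfaceSign_le_one x k
        nlinarith
    _ = (1 - #(interfaces x N M)) * sbar / 2 := by
        rw [← sum_div, ← sum_mul, sum_sub_distrib, hx.sum_interfaceSign, sum_const, nsmul_one]

theorem pnum_itf (hx : IsHeightBetween x a N M) : pnum (itf x) = #(interfaces x N M) := by
  have hsupp : Function.support (fun i => |itf x i|) ⊆ interfaces x N M := fun i hi =>
    hx.mem_interfaces.2 fun h => hi (by simp [itf, h])
  rw [pnum, finsum_eq_finsetSum_of_support_subset _ hsupp, card_eq_sum_ones, Nat.cast_sum]
  refine sum_congr rfl fun i hi => ?_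
  have := hx.mem_interfaces.1 hi; have := hx.binary i; have := hx.binary (i - 1)
  rw [itf, Nat.cast_one, abs_eq zero_le_one]
  omega

end IsHeightBetween

theorem IsHeight.exists_isHeightBetween {x : ℤ → ℤ} (hx : IsHeight x) :
    ∃ a N M, IsHeightBetween x a N M ∧ ∀ k, x (k - 1) ≠ x k → N + 1 < k ∧ k < M := by
  obtain ⟨hbin, a, b, hab, ⟨N, hN⟩, ⟨M, hM⟩⟩ := hx
  obtain rfl : b = 1 - a := by
    have := hN N le_rfl; have := hM M le_rfl; have := hbin N; have := hbin M; omega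
  have hx : IsHeightBetween x a N M := ⟨hbin, hN, hM⟩
  refine ⟨a, N - 1, M + 1, hx.mono (by omega) (by omega), fun k hk => ?_⟩
  have := hx.lt_of_sub_one_ne hk
  omega

theorem spin_flip_contribution_bound_general
    (x : ℤ → ℤ) (hx : IsHeight x)
    (p q : ℤ → ℝ)
    (hrate0 : ∀ k, x (k - 1) = x k → p k = 0 ∧ q k = 0)
    (sbar : ℝ) (hsbar : 0 < sbar)
    (hlow : ∀ k, x (k - 1) ≠ x k → sbar ≤ p k + q k)
    (hA4a : ∀ k l : ℤ, k < l → x (k - 1) ≠ x k → x (l - 1) ≠ x l →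
      (∀ m, k ≤ m → m < l → x m = x k) → q k + p l ≤ p k + q l) :
    Gflip p q x ≤ sbar - sbar * (pnum (itf x) : ℝ) / 2 := by
  obtain ⟨a, N, M, hx, hinner⟩ := hx.exists_isHeightBetween
  have hdrift := hx.sum_interfaces_drift_nonpos (e := fun k => p k - q k)
    (antitoneOn_of_consecutive x _ fun k l hkl hk hl hc => by linarith [hA4a k l hkl hk hl hc])
  have hflips := hx.sum_interfaces_flip_le hlow
  rw [hx.Gflip_eq hinner hrate0, sum_add_distrib, hx.pnum_itf]
  push_cast at hflips ⊢
  linarith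

/-- Spin-flip contribution bound: `(G^flip f_CD)(x) ≤ s̄ − s̄·|y|/2`. -/
theorem spin_flip_contribution_bound
    (x : ℤ → ℤ) (hx : IsHeight x)
    (p q : ℤ → ℝ)
    (hp : ∀ k, 0 ≤ p k) (hq : ∀ k, 0 ≤ q k)
    (hrate0 : ∀ k, x (k - 1) = x k → p k = 0 ∧ q k = 0)
    (sbar : ℝ) (hsbar : 0 < sbar)
    (hlow : ∀ k, x (k - 1) ≠ x k → sbar ≤ p k + q k)
    (hA4a : ∀ k l : ℤ, k < l → x (k - 1) ≠ x k → x (l - 1) ≠ x l →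
      (∀ m, k ≤ m → m < l → x m = x k) → q k + p l ≤ p k + q l) :
    Gflip p q x ≤ sbar - sbar * (pnum (itf x) : ℝ) / 2 :=
  spin_flip_contribution_bound_general x hx p q hrate0 sbar hsbar hlow hA4a
end

section
/- Rough bound on the spin-flip contribution: Let x ∈ 𝒮_hgt with interface y and suppose p_k(x) + q_k(x) ≤ 1 for every half-integer k. Then |(G^flip f_CD)(x)| ≤ Σ_k (p_k(x) + q_{k+1}(x))·|S(k)| ≤ 2·w(y)². -/
/-!
Flipping the height at `k` changes the inversion count by `±S(k)`: if `x_k = κ`, the inversions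
`(k, l)` are traded for the pairs `(l, k)` with `x_l = κ`, and symmetrically if `x_k = 1 - κ`;
`κ` itself is unchanged, being determined by the two limiting heights. This gives the first
inequality. For the second, the rates vanish where `x` is flat, i.e. outside the `w + 1` sites
`i_left - 1/2, …, i_right + 1/2`; there `p_k + q_{k+1} ≤ 2` and `|S(k)| ≤ w - 1`, and
`2 (w + 1)(w - 1) ≤ 2 w²`.
-/

open scoped BigOperators

lemma abs_finsum_mul_le {ι : Type*} {c d e : ι → ℝ} {s : Finset ι}
    (hs : Function.support c ⊆ s) (hc : ∀ i, 0 ≤ c i) (hde : ∀ i, |d i| ≤ e i) :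
    |∑ᶠ i, c i * d i| ≤ ∑ᶠ i, c i * e i := by
  rw [finsum_eq_sum_of_support_subset _ ((Function.support_mul_subset_left _ _).trans hs),
    finsum_eq_sum_of_support_subset _ ((Function.support_mul_subset_left _ _).trans hs)]
  refine (Finset.abs_sum_le_sum_abs _ _).trans (Finset.sum_le_sum fun i _ => ?_)
  rw [abs_mul, abs_of_nonneg (hc i)]
  exact mul_le_mul_of_nonneg_left (hde i) (hc i)

lemma ncard_le_of_subset_Ioo {s : Set ℤ} {m M : ℤ} (h : s ⊆ Set.Ioo m M) :
    s.ncard ≤ (M - m - 1).toNat := by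
  calc s.ncard ≤ (Set.Ioo m M).ncard := Set.ncard_le_ncard h (Set.finite_Ioo m M)
    _ = (M - m - 1).toNat := by rw [← Finset.coe_Ioo, Set.ncard_coe_finset, Int.card_Ioo]

def invSet (x : ℤ → ℤ) (a b : ℤ) : Set (ℤ × ℤ) := {p | p.1 < p.2 ∧ x p.1 = a ∧ x p.2 = b}

lemma fCD_eq_ncard (x : ℤ → ℤ) : fCD x = (invSet x (kappa x) (1 - kappa x)).ncard :=
  Nat.card_coe_set_eq _

lemma Sfun_eq_ncard (x : ℤ → ℤ) (k : ℤ) :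
    Sfun x k = ({l | l < k ∧ x l = kappa x}.ncard : ℤ) - {l | k < l ∧ x l = 1 - kappa x}.ncard := by
  rw [Sfun, ← Nat.card_coe_set_eq, ← Nat.card_coe_set_eq]
  rfl

section Inversions

variable {x x' : ℤ → ℤ} {a b k : ℤ}

lemma encard_invSet_add_encard (hx' : ∀ l, l ≠ k → x' l = x l) (hxk : x k = a)
    (hx'k : x' k = b) (hab : a ≠ b) :
    (invSet x a b).encard + {l | l < k ∧ x l = a}.encard
      = (invSet x' a b).encard + {l | k < l ∧ x l = b}.encard := by
  set R := {p : ℤ × ℤ | p ∈ invSet x a b ∧ p.1 ≠ k ∧ p.2 ≠ k}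
  have hR : R = {p : ℤ × ℤ | p ∈ invSet x' a b ∧ p.1 ≠ k ∧ p.2 ≠ k} := by
    ext ⟨i, j⟩
    simp only [R, invSet, Set.mem_ofPred_eq]
    constructor <;> rintro ⟨⟨hij, hi, hj⟩, hik, hjk⟩ <;> simp_all
  have hsplit : invSet x a b = R ∪ Prod.mk k '' {l | k < l ∧ x l = b} := by
    ext ⟨i, j⟩
    simp only [R, invSet, Set.mem_ofPred_eq, Set.mem_union, Set.mem_image, Prod.mk.injEq]
    by_cases hi : i = k
    · subst hi; by_cases hj : j = i <;> simp [*]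
    · by_cases hj : j = k
      · subst hj; simp [*]
      · simp [*, Ne.symm hi]
  have hsplit' : invSet x' a b = R ∪ (fun l => (l, k)) '' {l | l < k ∧ x l = a} := by
    ext ⟨i, j⟩
    rw [hR]
    simp only [invSet, Set.mem_ofPred_eq, Set.mem_union, Set.mem_image, Prod.mk.injEq]
    by_cases hi : i = k
    · subst hi; by_cases hj : j = i <;> simp [*, hab.symm]
    · by_cases hj : j = k
      · subst hj; simp [*]
      · simp [*, Ne.symm hj]
  have hdisj : Disjoint R (Prod.mk k '' {l | k < l ∧ x l = b}) := by
    rw [Set.disjoint_left]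
    rintro _ ⟨_, hk, _⟩ ⟨l, _, rfl⟩
    exact hk rfl
  have hdisj' : Disjoint R ((fun l => (l, k)) '' {l | l < k ∧ x l = a}) := by
    rw [Set.disjoint_left]
    rintro _ ⟨_, _, hk⟩ ⟨l, _, rfl⟩
    exact hk rfl
  rw [hsplit, hsplit', Set.encard_union_eq hdisj, Set.encard_union_eq hdisj',
    (Prod.mk_right_injective k).encard_image, (Prod.mk_left_injective k).encard_image,
    add_right_comm]

lemma invSet_finite {m M : ℤ} (ha : ∀ l, x l = a → m < l) (hb : ∀ l, x l = b → l < M) :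
    (invSet x a b).Finite :=
  ((Set.finite_Ioo m M).prod (Set.finite_Ioo m M)).subset fun _ ⟨hp, h1, h2⟩ =>
    ⟨⟨ha _ h1, hp.trans (hb _ h2)⟩, ⟨(ha _ h1).trans hp, hb _ h2⟩⟩

end Inversions

lemma itf_eq_zero_iff {x : ℤ → ℤ} {i : ℤ} : itf x i = 0 ↔ x (i - 1) = x i := by
  rw [itf, sub_eq_zero, eq_comm]

lemma sum_Ioc_itf (x : ℤ → ℤ) {m M : ℤ} (h : m ≤ M) :
    ∑ i ∈ Finset.Ioc m M, itf x i = x M - x m := by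
  induction M, h using Int.leInduction with
  | base => simp
  | succ n hmn ih =>
    have hIoc : Finset.Ioc m (n + 1) = insert (n + 1) (Finset.Ioc m n) := by
      ext; simp only [Finset.mem_Ioc, Finset.mem_insert]; omega
    rw [hIoc, Finset.sum_insert (by simp), ih, itf, add_sub_cancel_right]
    ring

lemma flipAt_apply_self (x : ℤ → ℤ) (k : ℤ) : flipAt x k k = 1 - x k :=
  Function.update_self _ _ _

lemma flipAt_apply_of_ne (x : ℤ → ℤ) {k l : ℤ} (h : l ≠ k) : flipAt x k l = x l :=
  Function.update_of_ne h _ _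

section Constancy

variable {x : ℤ → ℤ} {m M : ℤ}

lemma eq_of_le_of_itf_ne_zero (h : ∀ i, itf x i ≠ 0 → m < i) {l : ℤ} (hl : l ≤ m) :
    x l = x m := by
  induction l, hl using Int.leInductionDown with
  | base => rfl
  | pred n hn ih =>
    have h0 : itf x n = 0 := by_contra fun hne => absurd (h n hne) (by omega)
    rw [← ih, itf_eq_zero_iff.1 h0]

lemma eq_of_ge_of_itf_ne_zero (h : ∀ i, itf x i ≠ 0 → i ≤ M) {l : ℤ} (hl : M ≤ l) :
    x l = x M := by
  induction l, hl using Int.leInduction with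
  | base => rfl
  | succ n hn ih =>
    have h0 : itf x (n + 1) = 0 := by_contra fun hne => absurd (h _ hne) (by omega)
    rw [← ih, ← itf_eq_zero_iff.1 h0, add_sub_cancel_right]

end Constancy

structure IsHeightWithin (x : ℤ → ℤ) (m M : ℤ) : Prop where
  mem_zero_one : ∀ l, x l = 0 ∨ x l = 1
  ne : x m ≠ x M
  itf_support : ∀ i, itf x i ≠ 0 → m < i ∧ i ≤ M

lemma IsHeight.isHeightWithin {x : ℤ → ℤ} {m M : ℤ} (hx : IsHeight x)
    (h : ∀ i, itf x i ≠ 0 → m < i ∧ i ≤ M) : IsHeightWithin x m M where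
  mem_zero_one := hx.1
  itf_support := h
  ne := by
    obtain ⟨-, a, b, hab, ⟨N, hN⟩, ⟨N', hN'⟩⟩ := hx
    rwa [← eq_of_le_of_itf_ne_zero (fun i hi => (h i hi).1) (min_le_right N m),
      hN _ (min_le_left _ _), ← eq_of_ge_of_itf_ne_zero (fun i hi => (h i hi).2) (le_max_right N' M),
      hN' _ (le_max_left _ _)]

namespace IsHeightWithin

variable {x : ℤ → ℤ} {m M : ℤ}

lemma left_eq (hW : IsHeightWithin x m M) {l : ℤ} (hl : l ≤ m) : x l = x m :=
  eq_of_le_of_itf_ne_zero (fun i hi => (hW.itf_support i hi).1) hl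

lemma right_eq (hW : IsHeightWithin x m M) {l : ℤ} (hl : M ≤ l) : x l = x M :=
  eq_of_ge_of_itf_ne_zero (fun i hi => (hW.itf_support i hi).2) hl

lemma lt (hW : IsHeightWithin x m M) : m < M :=
  not_le.1 fun h => hW.ne (hW.right_eq h)

lemma charge_eq (hW : IsHeightWithin x m M) : charge (itf x) = x M - x m := by
  rw [charge, finsum_eq_sum_of_support_subset (s := Finset.Ioc m M), sum_Ioc_itf x hW.lt.le]
  intro i hi
  simpa using hW.itf_support i hi

lemma kappa_eq (hW : IsHeightWithin x m M) : kappa x = x M := by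
  have := hW.ne
  rw [kappa, hW.charge_eq]
  rcases hW.mem_zero_one m with h | h <;> rcases hW.mem_zero_one M with h' | h' <;> omega

lemma one_sub_kappa_eq (hW : IsHeightWithin x m M) : 1 - kappa x = x m := by
  have := hW.ne
  rw [hW.kappa_eq]
  rcases hW.mem_zero_one m with h | h <;> rcases hW.mem_zero_one M with h' | h' <;> omega

lemma lt_of_eq_kappa (hW : IsHeightWithin x m M) {l : ℤ} (hl : x l = kappa x) : m < l :=
  not_le.1 fun h => by have := hW.one_sub_kappa_eq; rw [← hW.left_eq h, hl] at this; omega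

lemma lt_of_eq_one_sub_kappa (hW : IsHeightWithin x m M) {l : ℤ} (hl : x l = 1 - kappa x) :
    l < M :=
  not_le.1 fun h => by have := hW.kappa_eq; rw [← hW.right_eq h, hl] at this; omega

protected lemma flipAt (hW : IsHeightWithin x m M) (k : ℤ) :
    IsHeightWithin (flipAt x k) (min m (k - 1)) (max M (k + 1)) where
  mem_zero_one l := by
    rcases eq_or_ne l k with rfl | hl
    · rw [flipAt_apply_self]; have := hW.mem_zero_one l; omega
    · rw [flipAt_apply_of_ne x hl]; exact hW.mem_zero_one l
  ne := by
    rw [flipAt_apply_of_ne x (by omega), flipAt_apply_of_ne x (by omega),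
      hW.left_eq (min_le_left _ _), hW.right_eq (le_max_left _ _)]
    exact hW.ne
  itf_support i hi := by
    by_cases hik : i = k ∨ i = k + 1
    · omega
    · rw [itf, flipAt_apply_of_ne x (by omega), flipAt_apply_of_ne x (by omega)] at hi
      have := hW.itf_support i hi
      omega

lemma kappa_flipAt (hW : IsHeightWithin x m M) (k : ℤ) : kappa (flipAt x k) = kappa x := by
  rw [(hW.flipAt k).kappa_eq, hW.kappa_eq, flipAt_apply_of_ne x (by omega),
    hW.right_eq (le_max_left _ _)]

lemma setOf_lt_and_eq_kappa_subset (hW : IsHeightWithin x m M) (k : ℤ) :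
    {l | l < k ∧ x l = kappa x} ⊆ Set.Ioo m k :=
  fun _ ⟨hlk, hl⟩ => ⟨hW.lt_of_eq_kappa hl, hlk⟩

lemma setOf_gt_and_eq_one_sub_kappa_subset (hW : IsHeightWithin x m M) (k : ℤ) :
    {l | k < l ∧ x l = 1 - kappa x} ⊆ Set.Ioo k M :=
  fun _ ⟨hkl, hl⟩ => ⟨hkl, hW.lt_of_eq_one_sub_kappa hl⟩

lemma abs_fCD_flipAt_sub (hW : IsHeightWithin x m M) (k : ℤ) :
    |(fCD (flipAt x k) : ℤ) - fCD x| = |Sfun x k| := by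
  have hA := (Set.finite_Ioo m k).subset (hW.setOf_lt_and_eq_kappa_subset k)
  have hB := (Set.finite_Ioo k M).subset (hW.setOf_gt_and_eq_one_sub_kappa_subset k)
  have hI : (invSet x (kappa x) (1 - kappa x)).Finite :=
    invSet_finite (fun _ => hW.lt_of_eq_kappa) (fun _ => hW.lt_of_eq_one_sub_kappa)
  have hI' : (invSet (flipAt x k) (kappa x) (1 - kappa x)).Finite := by
    have hW' := hW.flipAt k
    rw [← hW.kappa_flipAt k]
    exact invSet_finite (fun _ => hW'.lt_of_eq_kappa) (fun _ => hW'.lt_of_eq_one_sub_kappa)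
  have hoff : ∀ l, l ≠ k → flipAt x k l = x l := fun l => flipAt_apply_of_ne x
  have hflip := flipAt_apply_self x k
  rw [fCD_eq_ncard, fCD_eq_ncard, hW.kappa_flipAt, Sfun_eq_ncard]
  have hκ : kappa x ≠ 1 - kappa x := by omega
  obtain hk | hk : x k = kappa x ∨ x k = 1 - kappa x := by
    have := hW.mem_zero_one k; have := hW.mem_zero_one M; have := hW.kappa_eq; omega
  · have h := encard_invSet_add_encard hoff hk (by rw [hflip, hk]) hκ
    rw [← hI.cast_ncard_eq, ← hA.cast_ncard_eq, ← hI'.cast_ncard_eq, ← hB.cast_ncard_eq] at h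
    norm_cast at h
    congr 1
    omega
  · have hA' : {l | l < k ∧ flipAt x k l = kappa x} = {l | l < k ∧ x l = kappa x} :=
      Set.ext fun l => and_congr_right fun hl => by rw [hoff l hl.ne]
    have hB' : {l | k < l ∧ flipAt x k l = 1 - kappa x} = {l | k < l ∧ x l = 1 - kappa x} :=
      Set.ext fun l => and_congr_right fun hl => by rw [hoff l hl.ne']
    have h := encard_invSet_add_encard (fun l hl => (hoff l hl).symm) (by rw [hflip, hk]; ring)
      hk hκ
    rw [hA', hB', ← hI.cast_ncard_eq, ← hA.cast_ncard_eq, ← hI'.cast_ncard_eq,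
      ← hB.cast_ncard_eq] at h
    norm_cast at h
    rw [← abs_neg]
    congr 1
    omega

lemma abs_Sfun_le (hW : IsHeightWithin x m M) {k : ℤ} (hk : k ∈ Finset.Icc m M) :
    |Sfun x k| ≤ M - m - 1 := by
  have hA := ncard_le_of_subset_Ioo (hW.setOf_lt_and_eq_kappa_subset k)
  have hB := ncard_le_of_subset_Ioo (hW.setOf_gt_and_eq_one_sub_kappa_subset k)
  have := hW.lt
  rw [Finset.mem_Icc] at hk
  rw [Sfun_eq_ncard, abs_le]
  omega

lemma support_rate_subset {p q : ℤ → ℝ} (hW : IsHeightWithin x m M)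
    (hrate : ∀ k, x (k - 1) = x k → p k = 0 ∧ q k = 0) :
    Function.support (fun k => p k + q (k + 1)) ⊆ Finset.Icc m M := by
  intro k hk
  have hflat : ∀ j, j ≤ m ∨ M < j → x (j - 1) = x j := fun j hj =>
    itf_eq_zero_iff.1 (by_contra fun hne => by have := hW.itf_support j hne; omega)
  by_contra hk'
  rw [Finset.coe_Icc, Set.mem_Icc] at hk'
  apply hk
  show p k + q (k + 1) = 0
  rw [(hrate k (hflat k (by omega))).1, (hrate (k + 1) (hflat (k + 1) (by omega))).2, add_zero]

lemma finsum_mul_abs_Sfun_le (hW : IsHeightWithin x m M) {c : ℤ → ℝ} {C : ℝ}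
    (hs : Function.support c ⊆ Finset.Icc m M) (hc0 : ∀ k, 0 ≤ c k) (hc : ∀ k, c k ≤ C) :
    ∑ᶠ k, c k * |(Sfun x k : ℝ)| ≤ C * ((M - m : ℤ) : ℝ) ^ 2 := by
  have hC := (hc0 m).trans (hc m)
  have hmM := hW.lt
  have hterm : ∀ k ∈ Finset.Icc m M, c k * |(Sfun x k : ℝ)| ≤ C * ((M : ℝ) - m - 1) := by
    intro k hk
    have hS : |(Sfun x k : ℝ)| ≤ (M : ℝ) - m - 1 := by
      rw [← Int.cast_abs]
      exact_mod_cast hW.abs_Sfun_le hk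
    exact mul_le_mul (hc k) hS (abs_nonneg _) hC
  have hcard : ((Finset.Icc m M).card : ℝ) = M - m + 1 := by
    rw [Int.card_Icc, ← Int.cast_natCast, Int.toNat_of_nonneg (by omega)]
    push_cast
    ring
  rw [finsum_eq_sum_of_support_subset _ ((Function.support_mul_subset_left _ _).trans hs)]
  calc _ ≤ (Finset.Icc m M).card • (C * ((M : ℝ) - m - 1)) := Finset.sum_le_card_nsmul _ _ _ hterm
    _ = C * (((M - m : ℤ) : ℝ) ^ 2 - 1) := by rw [nsmul_eq_mul, hcard]; push_cast; ring
    _ ≤ C * ((M - m : ℤ) : ℝ) ^ 2 := mul_le_mul_of_nonneg_left (by linarith) hC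

end IsHeightWithin

/-- Rough bound on the spin-flip contribution:
`|(G^flip f_CD)(x)| ≤ Σ_k (p_k + q_{k+1})·|S(k)| ≤ 2·w(y)²`. -/
theorem rough_spin_flip_bound
    (x : ℤ → ℤ) (hx : IsHeight x)
    (p q : ℤ → ℝ)
    (hp : ∀ k, 0 ≤ p k) (hq : ∀ k, 0 ≤ q k)
    (hrate0 : ∀ k, x (k - 1) = x k → p k = 0 ∧ q k = 0)
    (hup : ∀ k, p k + q k ≤ 1)
    (il ir : ℤ)
    (hil : itf x il ≠ 0 ∧ ∀ i, itf x i ≠ 0 → il ≤ i)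
    (hir : itf x ir ≠ 0 ∧ ∀ i, itf x i ≠ 0 → i ≤ ir) :
    |Gflip p q x| ≤ ∑ᶠ k : ℤ, (p k + q (k + 1)) * |(Sfun x k : ℝ)| ∧
    (∑ᶠ k : ℤ, (p k + q (k + 1)) * |(Sfun x k : ℝ)|)
      ≤ 2 * ((ir - il + 1 : ℤ) : ℝ) ^ 2 := by
  have hW : IsHeightWithin x (il - 1) ir :=
    hx.isHeightWithin fun i hi => ⟨by linarith [hil.2 i hi], hir.2 i hi⟩
  have hs := hW.support_rate_subset hrate0
  have hc0 : ∀ k, 0 ≤ p k + q (k + 1) := fun k => add_nonneg (hp k) (hq (k + 1))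
  have hc2 : ∀ k, p k + q (k + 1) ≤ 2 := fun k => by
    linarith [hup k, hup (k + 1), hp (k + 1), hq k]
  refine ⟨abs_finsum_mul_le hs hc0 fun k => by exact_mod_cast (hW.abs_fCD_flipAt_sub k).le, ?_⟩
  convert hW.finsum_mul_abs_Sfun_le hs hc0 hc2 using 4
  ring
end

section
/- Rough bound on the full generator contribution: Let x ∈ 𝒮_hgt with interface y, let n = |y|, and suppose p_k(x) + q_k(x) ≤ 1 for every half-integer k and b⊕_i(y) + b⊖_i(y) ≤ B_n for every i ∈ ℤ, where B_n ≥ 0. Then for all α₁, α₂ ≥ 0: |α₁·(G^flip f_CD)(x) + α₂·(G^excl f_CD)(x)| ≤ 2·α₁·w(y)² + α₂·B_n·n. -/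
open scoped BigOperators

/-!
Away from the interface a height configuration is the constant `1 - κ` on the left and `κ` on
the right (`IsStepBetween κ il (ir - 1) x`). Flips and exchanges keep this shape, hence keep `κ`,
and `f_CD` counts `inversions`, all of which lie in the window. A flip at `k` only changes
inversion pairs through `k`, whose partner must lie in the window: at most `w - 1` of them, and
only the `w + 1` sites `il - 1 ≤ k ≤ ir` carry a flip rate, each at most `2`. Exchanging the
values at `k, k + 1` permutes all inversion pairs other than `(k, k + 1)`, so it changes `f_CD`
by at most `1`, and only the `n` bonds with `x k ≠ x (k + 1)` carry an exchange rate, each at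
most `B_n`.
-/

def inversions (c : ℤ) (u : ℤ → ℤ) : Set (ℤ × ℤ) :=
  {p | p.1 < p.2 ∧ u p.1 = c ∧ u p.2 = 1 - c}

def IsStepBetween (c L R : ℤ) (x : ℤ → ℤ) : Prop :=
  (∀ j < L, x j = 1 - c) ∧ ∀ j, R < j → x j = c

lemma eq_of_itf_eq_zero {x : ℤ → ℤ} {m n : ℤ} (hmn : m ≤ n)
    (h : ∀ i, m < i → i ≤ n → itf x i = 0) : x n = x m := by
  induction n, hmn using Int.leInduction with
  | base => rfl
  | succ n hmn ih =>
    have hstep := h (n + 1) (by omega) le_rfl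
    rw [itf, add_sub_cancel_right, sub_eq_zero] at hstep
    rw [hstep, ih fun i hi hin => h i hi (by omega)]

lemma sum_Icc_itf {x : ℤ → ℤ} {m n : ℤ} (hmn : m - 1 ≤ n) :
    ∑ i ∈ Finset.Icc m n, itf x i = x n - x (m - 1) := by
  induction n, hmn using Int.leInduction with
  | base => simp
  | succ n hmn ih =>
    rw [← Finset.insert_Icc_right_eq_Icc_add_one (by omega), Finset.sum_insert (by simp), ih, itf,
      add_sub_cancel_right]
    ring

lemma charge_itf_of_support_subset {x : ℤ → ℤ} {m n : ℤ} (hmn : m - 1 ≤ n)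
    (h : Function.support (itf x) ⊆ Set.Icc m n) : charge (itf x) = x n - x (m - 1) := by
  rw [charge, finsum_eq_sum_of_support_subset _ (s := Finset.Icc m n) (by simpa using h)]
  exact sum_Icc_itf hmn

lemma abs_ncard_sub_ncard_le {α : Type*} {s t : Set α} {n : ℕ} (hs : s.Finite) (ht : t.Finite)
    (hst : (s \ t).ncard ≤ n) (hts : (t \ s).ncard ≤ n) : |(s.ncard : ℤ) - t.ncard| ≤ n := by
  have := Set.ncard_le_ncard_sdiff_add_ncard s t ht
  have := Set.ncard_le_ncard_sdiff_add_ncard t s hs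
  rw [abs_le]
  omega

lemma abs_ncard_sub_ncard_le_one_of_sdiff_singleton {α : Type*} {s t : Set α} {a : α}
    (h : (s \ {a}).ncard = (t \ {a}).ncard) : |(s.ncard : ℤ) - t.ncard| ≤ 1 := by
  have := Set.ncard_le_ncard_sdiff_add_ncard s {a}
  have := Set.ncard_le_ncard_sdiff_add_ncard t {a}
  have := Set.ncard_sdiff_singleton_le s a
  have := Set.ncard_sdiff_singleton_le t a
  rw [Set.ncard_singleton] at *
  rw [abs_le]
  omega

lemma abs_finsum_mul_le_s9 {α : Type*} {a d : α → ℝ} {s : Set α} {A D : ℝ} (hs : s.Finite)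
    (hsupp : Function.support a ⊆ s) (ha : ∀ k ∈ s, 0 ≤ a k ∧ a k ≤ A)
    (hd : ∀ k ∈ s, |d k| ≤ D) : |∑ᶠ k, a k * d k| ≤ s.ncard * (A * D) := by
  have hsupp' : Function.support (fun k => a k * d k) ⊆ hs.toFinset := by
    rw [Set.Finite.coe_toFinset]
    exact (Function.support_mul_subset_left _ _).trans hsupp
  have hterm : ∀ k ∈ hs.toFinset, |a k * d k| ≤ A * D := by
    intro k hk
    rw [Set.Finite.mem_toFinset] at hk
    obtain ⟨h0, hA⟩ := ha k hk
    rw [abs_mul, abs_of_nonneg h0]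
    exact mul_le_mul hA (hd k hk) (abs_nonneg _) (h0.trans hA)
  rw [finsum_eq_sum_of_support_subset _ hsupp', Set.ncard_eq_toFinset_card s hs]
  calc |∑ k ∈ hs.toFinset, a k * d k| ≤ ∑ k ∈ hs.toFinset, |a k * d k| :=
        Finset.abs_sum_le_sum_abs _ _
    _ ≤ ∑ k ∈ hs.toFinset, A * D := Finset.sum_le_sum hterm
    _ = _ := by rw [Finset.sum_const, nsmul_eq_mul]

lemma swapAt_eq_comp_swap (x : ℤ → ℤ) (k : ℤ) : swapAt x k = x ∘ Equiv.swap k (k + 1) := by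
  ext j
  simp only [swapAt, Function.comp_apply, Equiv.swap_apply_def]
  split_ifs <;> rfl

lemma swap_lt_swap_and_ne_iff (a b k : ℤ) :
    (Equiv.swap k (k + 1) a < Equiv.swap k (k + 1) b ∧
        (Equiv.swap k (k + 1) a, Equiv.swap k (k + 1) b) ≠ (k, k + 1)) ↔
      a < b ∧ (a, b) ≠ (k, k + 1) := by
  simp only [Equiv.swap_apply_def, ne_eq, Prod.mk.injEq]
  split_ifs <;> omega

lemma ncard_inversions_comp_swap_sdiff (c : ℤ) (u : ℤ → ℤ) (k : ℤ) :
    (inversions c (u ∘ Equiv.swap k (k + 1)) \ {(k, k + 1)}).ncard =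
      (inversions c u \ {(k, k + 1)}).ncard := by
  have hpre : inversions c (u ∘ Equiv.swap k (k + 1)) \ {(k, k + 1)} =
      Prod.map (Equiv.swap k (k + 1)) (Equiv.swap k (k + 1)) ⁻¹' (inversions c u \ {(k, k + 1)}) := by
    ext ⟨a, b⟩
    have := swap_lt_swap_and_ne_iff a b k
    simp only [inversions, Set.mem_sdiff, Set.mem_preimage, Set.mem_singleton_iff,
      Set.mem_ofPred_eq, Prod.map_apply, Function.comp_apply] at this ⊢
    tauto
  rw [hpre, Set.ncard_preimage_of_injective_subset_range
    (Prod.map_injective.2 ⟨(Equiv.swap _ _).injective, (Equiv.swap _ _).injective⟩)]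
  rw [(Prod.map_surjective.2 ⟨(Equiv.swap _ _).surjective, (Equiv.swap _ _).surjective⟩).range_eq]
  exact Set.subset_univ _

namespace IsStepBetween

variable {c L R : ℤ} {x : ℤ → ℤ}

lemma le_add_one (hx : IsStepBetween c L R x) : L ≤ R + 1 := by
  by_contra! h
  have h1 := hx.1 (R + 1) (by omega)
  have h2 := hx.2 (R + 1) (by omega)
  omega

lemma support_itf_subset (hx : IsStepBetween c L R x) :
    Function.support (itf x) ⊆ Set.Icc L (R + 1) := by
  intro i hi
  by_contra hout
  rw [Set.mem_Icc, not_and_or] at hout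
  apply hi
  rcases hout with hi | hi
  · rw [itf, hx.1 i (by omega), hx.1 (i - 1) (by omega), sub_self]
  · rw [itf, hx.2 i (by omega), hx.2 (i - 1) (by omega), sub_self]

lemma kappa_eq (hx : IsStepBetween c L R x) : kappa x = c := by
  have hLR := hx.le_add_one
  rw [kappa, charge_itf_of_support_subset (by omega) hx.support_itf_subset,
    hx.2 (R + 1) (by omega), hx.1 (L - 1) (by omega)]
  omega

lemma inversions_subset (hx : IsStepBetween c L R x) :
    inversions c x ⊆ Set.Icc L R ×ˢ Set.Icc L R := by
  rintro ⟨a, b⟩ ⟨hab, ha, hb⟩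
  dsimp only at hab ha hb
  have hLa : L ≤ a := by
    by_contra! h
    have := hx.1 a h
    omega
  have hbR : b ≤ R := by
    by_contra! h
    have := hx.2 b h
    omega
  exact ⟨⟨hLa, by omega⟩, ⟨by omega, hbR⟩⟩

lemma finite_inversions (hx : IsStepBetween c L R x) : (inversions c x).Finite :=
  ((Set.finite_Icc L R).prod (Set.finite_Icc L R)).subset hx.inversions_subset

lemma fCD_eq (hx : IsStepBetween c L R x) : fCD x = (inversions c x).ncard := by
  rw [fCD, ← hx.kappa_eq]
  exact Nat.card_coe_set_eq _

lemma update (hx : IsStepBetween c L R x) (k v : ℤ) :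
    IsStepBetween c (min L k) (max R k) (Function.update x k v) :=
  ⟨fun j hj => by rw [Function.update_of_ne (by omega), hx.1 j (by omega)],
    fun j hj => by rw [Function.update_of_ne (by omega), hx.2 j (by omega)]⟩

lemma comp_swap (hx : IsStepBetween c L R x) (k : ℤ) :
    IsStepBetween c (min L k) (max R (k + 1)) (x ∘ Equiv.swap k (k + 1)) :=
  ⟨fun j hj => by
      rw [Function.comp_apply, Equiv.swap_apply_of_ne_of_ne (by omega) (by omega), hx.1 j (by omega)],
    fun j hj => by
      rw [Function.comp_apply, Equiv.swap_apply_of_ne_of_ne (by omega) (by omega), hx.2 j (by omega)]⟩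

lemma ncard_inversions_sdiff_le {w u v : ℤ → ℤ} {k : ℤ} (hw : IsStepBetween c L R w)
    (hu : ∀ j ≠ k, u j = w j) (hv : ∀ j ≠ k, v j = w j) (hLk : L - 1 ≤ k) (hkR : k ≤ R + 1) :
    (inversions c u \ inversions c v).ncard ≤ (Finset.Icc L R).card := by
  have hthrough : ∀ p ∈ inversions c u \ inversions c v,
      p.1 < p.2 ∧ (p.1 = k ∧ p.2 ≤ R ∨ p.2 = k ∧ L ≤ p.1) := by
    rintro ⟨a, b⟩ ⟨⟨hab, ha, hb⟩, hnot⟩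
    dsimp only at hab ha hb ⊢
    refine ⟨hab, ?_⟩
    by_cases hak : a = k
    · have hwb : w b = 1 - c := by rw [← hu b (by omega), hb]
      refine .inl ⟨hak, ?_⟩
      by_contra! hbR
      have := hw.2 b hbR
      omega
    · by_cases hbk : b = k
      · have hwa : w a = c := by rw [← hu a hak, ha]
        refine .inr ⟨hbk, ?_⟩
        by_contra! haL
        have := hw.1 a haL
        omega
      · exact absurd ⟨hab, by rw [hv a hak, ← hu a hak, ha], by rw [hv b hbk, ← hu b hbk, hb]⟩ hnot
  rw [← Set.ncard_coe_finset]
  refine Set.ncard_le_ncard_of_injOn (fun p => p.1 + p.2 - k) (fun p hp => ?_) (fun p hp q hq hpq => ?_)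
    (Finset.finite_toSet _)
  · have := hthrough p hp
    simp only [Finset.coe_Icc, Set.mem_Icc]
    omega
  · have := hthrough p hp
    have := hthrough q hq
    simp only at hpq
    exact Prod.ext (by omega) (by omega)

lemma apply_sub_one_eq (hx : IsStepBetween c L R x) {j : ℤ} (hj : j < L ∨ R < j - 1) :
    x (j - 1) = x j := by
  rcases hj with hj | hj
  · rw [hx.1 j hj, hx.1 (j - 1) (by omega)]
  · rw [hx.2 j (by omega), hx.2 (j - 1) hj]

lemma finite_setOf_ne_succ (hx : IsStepBetween c L R x) : {k | x k ≠ x (k + 1)}.Finite := by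
  refine (Set.finite_Icc (L - 1) R).subset fun k hk => ?_
  by_contra hout
  rw [Set.mem_Icc, not_and_or] at hout
  exact hk (by simpa using hx.apply_sub_one_eq (j := k + 1) (by omega))

lemma abs_fCD_flipAt_sub_le (hx : IsStepBetween c L R x) {k : ℤ} (hLk : L - 1 ≤ k)
    (hkR : k ≤ R + 1) : |(fCD (flipAt x k) : ℝ) - fCD x| ≤ (Finset.Icc L R).card := by
  have hflip : IsStepBetween c (min L k) (max R k) (flipAt x k) := hx.update k (1 - x k)
  have hoff : ∀ j ≠ k, flipAt x k j = x j := fun j hj => Function.update_of_ne hj _ _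
  rw [hflip.fCD_eq, hx.fCD_eq]
  exact_mod_cast abs_ncard_sub_ncard_le hflip.finite_inversions hx.finite_inversions
    (hx.ncard_inversions_sdiff_le hoff (fun _ _ => rfl) hLk hkR)
    (hx.ncard_inversions_sdiff_le (fun _ _ => rfl) hoff hLk hkR)

lemma abs_fCD_swapAt_sub_le (hx : IsStepBetween c L R x) (k : ℤ) :
    |(fCD (swapAt x k) : ℝ) - fCD x| ≤ 1 := by
  rw [swapAt_eq_comp_swap, (hx.comp_swap k).fCD_eq, hx.fCD_eq]
  exact_mod_cast abs_ncard_sub_ncard_le_one_of_sdiff_singleton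
    (ncard_inversions_comp_swap_sdiff c x k)

lemma abs_Gflip_le (hx : IsStepBetween c L R x) {p q : ℤ → ℝ} (hp : ∀ k, 0 ≤ p k)
    (hq : ∀ k, 0 ≤ q k) (hrate0 : ∀ k, x (k - 1) = x k → p k = 0 ∧ q k = 0)
    (hup : ∀ k, p k + q k ≤ 1) :
    |Gflip p q x| ≤ (Finset.Icc (L - 1) (R + 1)).card * (2 * (Finset.Icc L R).card) := by
  have hsupp : Function.support (fun k => p k + q (k + 1)) ⊆ ↑(Finset.Icc (L - 1) (R + 1)) := by
    intro k hk
    by_contra hout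
    rw [Finset.coe_Icc, Set.mem_Icc, not_and_or] at hout
    apply hk
    beta_reduce
    rw [(hrate0 k (hx.apply_sub_one_eq (by omega))).1,
      (hrate0 (k + 1) (hx.apply_sub_one_eq (by omega))).2, add_zero]
  have hrate : ∀ k, 0 ≤ p k + q (k + 1) ∧ p k + q (k + 1) ≤ 2 := fun k =>
    ⟨add_nonneg (hp k) (hq (k + 1)), by linarith [hup k, hup (k + 1), hp (k + 1), hq k]⟩
  have h := abs_finsum_mul_le_s9 (a := fun k => p k + q (k + 1))
    (d := fun k => (fCD (flipAt x k) : ℝ) - fCD x) (Finset.finite_toSet _) hsupp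
    (fun k _ => hrate k) (fun k hk => by
      rw [Finset.coe_Icc, Set.mem_Icc] at hk
      exact hx.abs_fCD_flipAt_sub_le hk.1 hk.2)
  rwa [Set.ncard_coe_finset] at h

lemma abs_Gexcl_le (hx : IsStepBetween c L R x) {bp bm : ℤ → ℝ} (hbp : ∀ i, 0 ≤ bp i)
    (hbm : ∀ i, 0 ≤ bm i) {B : ℝ} (hbB : ∀ i, bp i + bm i ≤ B) :
    |Gexcl bp bm x| ≤ {k | x k ≠ x (k + 1)}.ncard * B := by
  have hsupp : Function.support (fun k =>
      (if x k = 0 ∧ x (k + 1) = 1 then bp (k + 1) else 0) +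
        (if x k = 1 ∧ x (k + 1) = 0 then bm (k + 1) else 0)) ⊆ {k | x k ≠ x (k + 1)} := by
    intro k hk heq
    apply hk
    beta_reduce
    rw [if_neg (by omega), if_neg (by omega), add_zero]
  have hrate : ∀ k, 0 ≤ (if x k = 0 ∧ x (k + 1) = 1 then bp (k + 1) else 0) +
        (if x k = 1 ∧ x (k + 1) = 0 then bm (k + 1) else 0) ∧
      (if x k = 0 ∧ x (k + 1) = 1 then bp (k + 1) else 0) +
        (if x k = 1 ∧ x (k + 1) = 0 then bm (k + 1) else 0) ≤ B := by
    intro k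
    have := hbB (k + 1)
    have := hbp (k + 1)
    have := hbm (k + 1)
    split_ifs <;> constructor <;> first | omega | linarith
  have h := abs_finsum_mul_le_s9 hx.finite_setOf_ne_succ hsupp (fun k _ => hrate k)
    (fun k _ => hx.abs_fCD_swapAt_sub_le k)
  rwa [mul_one] at h

end IsStepBetween

lemma pnum_itf_eq_ncard {x : ℤ → ℤ} (hx01 : ∀ k, x k = 0 ∨ x k = 1)
    (hs : {k | x k ≠ x (k + 1)}.Finite) : pnum (itf x) = {k | x k ≠ x (k + 1)}.ncard := by
  have hshift : ∀ k, |itf x (k + 1)| = if x k ≠ x (k + 1) then 1 else 0 := by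
    intro k
    rw [itf, add_sub_cancel_right]
    rcases hx01 k with h | h <;> rcases hx01 (k + 1) with h' | h' <;> simp [h, h']
  have hsupp : Function.support (fun k => |itf x (k + 1)|) ⊆ hs.toFinset := by
    intro k hk
    simpa [hshift k] using hk
  rw [pnum, ← finsum_comp_equiv (Equiv.addRight (1 : ℤ)) (f := fun i => |itf x i|)]
  simp only [Equiv.coe_addRight]
  rw [finsum_eq_sum_of_support_subset _ hsupp, Set.ncard_eq_toFinset_card _ hs,
    Finset.card_eq_sum_ones, Nat.cast_sum, Nat.cast_one]
  refine Finset.sum_congr rfl fun k hk => ?_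
  rw [hshift k, if_pos (by simpa using hk)]

lemma isStepBetween_of_isHeight {x : ℤ → ℤ} (hx : IsHeight x) {il ir : ℤ}
    (hil : ∀ i, itf x i ≠ 0 → il ≤ i) (hir : ∀ i, itf x i ≠ 0 → i ≤ ir) :
    IsStepBetween (x ir) il (ir - 1) x := by
  obtain ⟨hx01, a, b, hab, ⟨N, hN⟩, ⟨M, hM⟩⟩ := hx
  have hflat : ∀ i, i < il ∨ ir < i → itf x i = 0 := by
    intro i hi
    by_contra h
    have := hil i h
    have := hir i h
    omega
  have hleft : ∀ j < il, x j = a := fun j hj => by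
    rw [eq_of_itf_eq_zero (min_le_right N j) fun i _ hi => hflat i (.inl (by omega)),
      hN _ (min_le_left N j)]
  have hright : ∀ j, ir ≤ j → x j = x ir := fun j hj =>
    eq_of_itf_eq_zero hj fun i hi _ => hflat i (.inr hi)
  have hb : x ir = b := by rw [← hright _ (le_max_right M ir), hM _ (le_max_left M ir)]
  refine ⟨fun j hj => ?_, fun j hj => hright j (by omega)⟩
  have := hx01 j
  have := hx01 ir
  have := hleft j hj
  omega

lemma card_Icc_mul_card_Icc_le (L R : ℤ) :
    ((Finset.Icc (L - 1) (R + 1)).card * (Finset.Icc L R).card : ℤ) ≤ (R - L + 2) ^ 2 := by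
  rw [Int.card_Icc, Int.card_Icc]
  rcases le_or_gt L (R + 1) with h | h
  · rw [Int.toNat_of_nonneg (by omega), Int.toNat_of_nonneg (by omega)]
    nlinarith
  · rw [Int.toNat_of_nonpos (show R + 1 - L ≤ 0 by omega), Nat.cast_zero, mul_zero]
    positivity

theorem rough_generator_bound_general
    (x : ℤ → ℤ) (hx : IsHeight x)
    (p q bp bm : ℤ → ℝ)
    (hp : ∀ k, 0 ≤ p k) (hq : ∀ k, 0 ≤ q k)
    (hbp : ∀ i, 0 ≤ bp i) (hbm : ∀ i, 0 ≤ bm i)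
    (hrate0 : ∀ k, x (k - 1) = x k → p k = 0 ∧ q k = 0)
    (hup : ∀ k, p k + q k ≤ 1)
    (il ir : ℤ)
    (hil : itf x il ≠ 0 ∧ ∀ i, itf x i ≠ 0 → il ≤ i)
    (hir : itf x ir ≠ 0 ∧ ∀ i, itf x i ≠ 0 → i ≤ ir)
    (Bn : ℝ)
    (hbB : ∀ i : ℤ, bp i + bm i ≤ Bn)
    (α₁ α₂ : ℝ) (hα₁ : 0 ≤ α₁) (hα₂ : 0 ≤ α₂) :
    |α₁ * Gflip p q x + α₂ * Gexcl bp bm x|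
      ≤ 2 * α₁ * ((ir - il + 1 : ℤ) : ℝ) ^ 2 + α₂ * Bn * (pnum (itf x) : ℝ) := by
  have hstep := isStepBetween_of_isHeight hx hil.2 hir.2
  have hflip := hstep.abs_Gflip_le hp hq hrate0 hup
  have hexcl := hstep.abs_Gexcl_le hbp hbm hbB
  have hpnum : (pnum (itf x) : ℝ) = {k | x k ≠ x (k + 1)}.ncard := by
    rw [pnum_itf_eq_ncard hx.1 hstep.finite_setOf_ne_succ, Int.cast_natCast]
  rw [← hpnum] at hexcl
  have hwidth : ((Finset.Icc (il - 1) (ir - 1 + 1)).card * (Finset.Icc il (ir - 1)).card : ℝ) ≤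
      ((ir - il + 1 : ℤ) : ℝ) ^ 2 := by
    have h := card_Icc_mul_card_Icc_le il (ir - 1)
    rw [show ir - 1 - il + 2 = ir - il + 1 by ring] at h
    exact_mod_cast h
  calc |α₁ * Gflip p q x + α₂ * Gexcl bp bm x|
      ≤ α₁ * |Gflip p q x| + α₂ * |Gexcl bp bm x| := by
        refine (abs_add_le _ _).trans_eq ?_
        rw [abs_mul, abs_mul, abs_of_nonneg hα₁, abs_of_nonneg hα₂]
    _ ≤ α₁ * (2 * ((ir - il + 1 : ℤ) : ℝ) ^ 2) + α₂ * ((pnum (itf x) : ℝ) * Bn) := by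
        gcongr
        linarith
    _ = _ := by ring

/-- Rough bound on the full generator contribution:
`|α₁·(G^flip f_CD)(x) + α₂·(G^excl f_CD)(x)| ≤ 2α₁w(y)² + α₂·B_n·n`. -/
theorem rough_generator_bound
    (x : ℤ → ℤ) (hx : IsHeight x)
    (p q bp bm : ℤ → ℝ)
    (hp : ∀ k, 0 ≤ p k) (hq : ∀ k, 0 ≤ q k)
    (hbp : ∀ i, 0 ≤ bp i) (hbm : ∀ i, 0 ≤ bm i)
    (hrate0 : ∀ k, x (k - 1) = x k → p k = 0 ∧ q k = 0)
    (hup : ∀ k, p k + q k ≤ 1)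
    (il ir : ℤ)
    (hil : itf x il ≠ 0 ∧ ∀ i, itf x i ≠ 0 → il ≤ i)
    (hir : itf x ir ≠ 0 ∧ ∀ i, itf x i ≠ 0 → i ≤ ir)
    (Bn : ℝ) (hBn : 0 ≤ Bn)
    (hbB : ∀ i : ℤ, bp i + bm i ≤ Bn)
    (α₁ α₂ : ℝ) (hα₁ : 0 ≤ α₁) (hα₂ : 0 ≤ α₂) :
    |α₁ * Gflip p q x + α₂ * Gexcl bp bm x|
      ≤ 2 * α₁ * ((ir - il + 1 : ℤ) : ℝ) ^ 2 + α₂ * Bn * (pnum (itf x) : ℝ) :=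
  rough_generator_bound_general x hx p q bp bm hp hq hbp hbm hrate0 hup il ir hil hir Bn hbB α₁ α₂
    hα₁ hα₂
end
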